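/- arXiv:math/0003115 — 4 statements merged into one kernel-verified Lean document; each statement's English description precedes it below -/
import Mathlib

section
/- If $C$ is a club subset of $\omega_1$, $\gamma < \omega_1$, and $A \subseteq \omega_1$ has order type $\mathrm{otp}(A) < \omega^{\gamma}$, then there exists $\beta \in C$ such that $\sup(A \cap \beta) < \beta$. -/
open Ordinal

/-- The first uncountable ordinal. -/
noncomputable def omega1 : Ordinal.{0} := (Cardinal.aleph 1).ord

/-- The order type of a set of ordinals. -/
noncomputable def otp (A : Set Ordinal.{0}) : Ordinal.{1} :=
  Ordinal.type (Subrel ((· < ·) : Ordinal.{0} → Ordinal.{0} → Prop) (· ∈ A))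

/-- `C` is a club (closed unbounded) subset of `θ`. -/
def IsClubIn (C : Set Ordinal.{0}) (θ : Ordinal.{0}) : Prop :=
  C ⊆ Set.Iio θ ∧
  (∀ δ < θ, Order.IsSuccLimit δ → (∀ α < δ, ∃ β ∈ C, α < β ∧ β < δ) → δ ∈ C) ∧
  (∀ α < θ, ∃ β ∈ C, α ≤ β)

/-! A set of order type below `ω ^ γ` with `γ` countable is countable, hence bounded below `ω₁`
by regularity; any club point above its supremum works. -/

open Cardinal

theorem omega0_opow_lt_omega1 {γ : Ordinal.{0}} (hγ : γ < omega1) : ω ^ γ < omega1 :=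
  isPrincipal_opow_ord (aleph0_le_aleph 1) (by simp [ord_aleph]) hγ

theorem card_otp (A : Set Ordinal.{0}) : (otp A).card = #A :=
  card_type _

theorem countable_of_otp_lt_lift_omega1 {A : Set Ordinal.{0}} (h : otp A < lift.{1} omega1) :
    A.Countable := by
  rw [omega1, lift_ord, lt_ord, card_otp, lift_aleph, Ordinal.lift_one] at h
  exact le_aleph0_iff_set_countable.1 (lt_aleph_one_iff.1 h)

theorem sSup_lt_omega1 {A : Set Ordinal.{0}} (hA : A ⊆ Set.Iio omega1) (hc : A.Countable) :
    sSup A < omega1 := by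
  refine sSup_lt_of_lt_cof ?_ hA
  rw [← lift_cof, omega1, ord_aleph, cof_omega_one, lift_aleph, Ordinal.lift_one]
  exact lt_aleph_one_iff.2 hc.le_aleph0

/-- If `C` is a club subset of `ω₁`, `γ < ω₁`, and `A ⊆ ω₁` has order type
`otp(A) < ω ^ γ`, then there exists `β ∈ C` such that `sup(A ∩ β) < β`. -/
theorem stmt0 (C A : Set Ordinal.{0}) (γ : Ordinal.{0})
    (hC : IsClubIn C omega1) (hγ : γ < omega1)
    (hA : A ⊆ Set.Iio omega1)
    (hotp : otp A < Ordinal.lift.{1} (Ordinal.omega0 ^ γ)) :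
    ∃ β ∈ C, sSup (A ∩ Set.Iio β) < β := by
  have hAc : A.Countable :=
    countable_of_otp_lt_lift_omega1 (hotp.trans (lift_lt.2 (omega0_opow_lt_omega1 hγ)))
  have hsucc : sSup A + 1 < omega1 :=
    (isSuccLimit_ord (aleph0_le_aleph 1)).add_one_lt (sSup_lt_omega1 hA hAc)
  obtain ⟨β, hβC, hβ⟩ := hC.2.2 _ hsucc
  refine ⟨β, hβC, ?_⟩
  calc sSup (A ∩ Set.Iio β) ≤ sSup A :=
        csSup_le_csSup' ⟨omega1, fun _ ha => (hA ha).le⟩ Set.inter_subset_left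
    _ < sSup A + 1 := lt_add_one _
    _ ≤ β := hβ
end

section
/- Let $\bar C = \langle C_\delta : \delta < \omega_1 \text{ limit} \rangle$ with each $C_\delta$ an unbounded subset of $\delta$, and let $Q_{\bar C}$ be the set of all bounded sets $c$ that are closed subsets of some ordinal $\alpha < \omega_1$ such that for every limit ordinal $\delta \le \alpha$, if $\delta = \sup(c \cap \delta)$ then $c \cap C_\delta$ is bounded in $\delta$; order $Q_{\bar C}$ by end-extension. Then for each $\alpha < \omega_1$, the set $\mathcal{I}^*_\alpha = \{ p \in Q_{\bar C} : \exists \beta \in p,\ \beta \ge \alpha \}$ is dense in $Q_{\bar C}$. -/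
open Ordinal

/-- The club-shooting forcing `Q_{\bar C}`: conditions are sets `c` that are
closed bounded subsets of some `α < ω₁` such that for every limit `δ ≤ α`,
if `δ = sup(c ∩ δ)` then `c ∩ C_δ` is bounded in `δ`. -/
def QbarC (Cbar : Ordinal.{0} → Set Ordinal.{0}) : Set (Set Ordinal.{0}) :=
  {c | ∃ α < omega1, c ⊆ Set.Iio α ∧
    (∀ δ < α, Order.IsSuccLimit δ → sSup (c ∩ Set.Iio δ) = δ → δ ∈ c) ∧
    (∀ δ ≤ α, Order.IsSuccLimit δ → sSup (c ∩ Set.Iio δ) = δ → sSup (c ∩ Cbar δ) < δ)}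

/-- `c₁` is an initial segment of `c₂` (end-extension ordering). -/
def EndExt (c₁ c₂ : Set Ordinal.{0}) : Prop :=
  c₁ ⊆ c₂ ∧ ∀ y ∈ c₂, ∀ x ∈ c₁, y ≤ x → y ∈ c₁

/-! Extend a condition `p ⊆ α₀` by the two points `α₀ ≤ β := max α α₀`. Adding `α₀` keeps
`p ∪ {α₀, β}` closed at `α₀`. Below `α₀` nothing changes, and `C_δ ⊆ δ` keeps the new points
out of `C_δ`; at a limit `δ ∈ (α₀, β]` the new set is bounded by `α₀` below `δ`, so neither
requirement applies there. -/

open Set Order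

theorem union_inter_Iio_of_subset_Ici {ι : Type*} [Preorder ι] {s t : Set ι} {a δ : ι}
    (hs : s ⊆ Ici a) (hδ : δ ≤ a) : (t ∪ s) ∩ Iio δ = t ∩ Iio δ := by
  have : s ∩ Iio δ = ∅ :=
    eq_empty_of_forall_notMem fun x hx => (hx.2.trans_le hδ).not_ge (hs hx.1)
  rw [union_inter_distrib_right, this, union_empty]

theorem endExt_union_of_subset_Ici {s t : Set Ordinal.{0}} {a : Ordinal.{0}}
    (ht : t ⊆ Iio a) (hs : s ⊆ Ici a) : EndExt t (t ∪ s) := by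
  refine ⟨subset_union_left, fun y hy x hx hyx => hy.resolve_right fun hys => ?_⟩
  exact (hyx.trans_lt (ht hx)).not_ge (hs hys)

section UnionPair

variable {p : Set Ordinal.{0}} {α₀ β δ : Ordinal.{0}}

theorem pair_subset_Ici (h : α₀ ≤ β) : ({α₀, β} : Set Ordinal.{0}) ⊆ Ici α₀ := by
  rintro x (rfl | rfl)
  exacts [mem_Ici.2 le_rfl, h]

theorem sSup_union_pair_inter_Iio_le (hp : p ⊆ Iio α₀) (hδ : δ ≤ β) :
    sSup ((p ∪ {α₀, β}) ∩ Iio δ) ≤ α₀ := by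
  refine csSup_le' fun x hx => ?_
  obtain ⟨hx | rfl | rfl, hxδ⟩ := hx
  exacts [(hp hx).le, le_rfl, absurd hδ (not_le.2 hxδ)]

theorem le_and_sSup_inter_Iio_of_sSup_union_pair (hp : p ⊆ Iio α₀) (hα₀ : α₀ ≤ β)
    (hδ : δ ≤ β) (hsup : sSup ((p ∪ {α₀, β}) ∩ Iio δ) = δ) :
    δ ≤ α₀ ∧ sSup (p ∩ Iio δ) = δ := by
  have hδα₀ : δ ≤ α₀ := hsup ▸ sSup_union_pair_inter_Iio_le hp hδ
  exact ⟨hδα₀, by rwa [union_inter_Iio_of_subset_Ici (pair_subset_Ici hα₀) hδα₀] at hsup⟩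

theorem union_pair_inter_of_subset_Iio {C : Set Ordinal.{0}} (hα₀ : α₀ ≤ β) (hδ : δ ≤ α₀)
    (hC : C ⊆ Iio δ) : (p ∪ {α₀, β}) ∩ C = p ∩ C := by
  rw [← inter_eq_right.2 hC, ← inter_assoc, ← inter_assoc,
    union_inter_Iio_of_subset_Ici (pair_subset_Ici hα₀) hδ]

theorem union_pair_mem_QbarC {Cbar : Ordinal.{0} → Set Ordinal.{0}}
    (hCbar : ∀ δ ≤ β, IsSuccLimit δ → Cbar δ ⊆ Iio δ) (hp : p ⊆ Iio α₀)
    (hclosed : ∀ δ < α₀, IsSuccLimit δ → sSup (p ∩ Iio δ) = δ → δ ∈ p)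
    (hbdd : ∀ δ ≤ α₀, IsSuccLimit δ → sSup (p ∩ Iio δ) = δ → sSup (p ∩ Cbar δ) < δ)
    (hα₀ : α₀ ≤ β) (hβ : β < omega1) : p ∪ {α₀, β} ∈ QbarC Cbar := by
  have hω : IsSuccLimit omega1 := Cardinal.isSuccLimit_ord (Cardinal.aleph0_le_aleph 1)
  refine ⟨succ β, hω.succ_lt hβ, ?_, fun δ hδ hlim hsup => ?_, fun δ hδ hlim hsup => ?_⟩
  · rintro x (hx | rfl | rfl)
    exacts [(hp hx).trans_le (hα₀.trans (le_succ β)), hα₀.trans_lt (lt_succ β), lt_succ x]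
  · obtain ⟨hδα₀, hsup⟩ :=
      le_and_sSup_inter_Iio_of_sSup_union_pair hp hα₀ (lt_succ_iff.1 hδ) hsup
    rcases hδα₀.lt_or_eq with hlt | rfl
    exacts [Or.inl (hclosed δ hlt hlim hsup), Or.inr (Or.inl rfl)]
  · have hδβ : δ ≤ β := lt_succ_iff.1 (hδ.lt_of_ne (hlim.succ_ne β).symm)
    obtain ⟨hδα₀, hsup⟩ := le_and_sSup_inter_Iio_of_sSup_union_pair hp hα₀ hδβ hsup
    rw [union_pair_inter_of_subset_Iio hα₀ hδα₀ (hCbar δ hδβ hlim)]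
    exact hbdd δ hδα₀ hlim hsup

end UnionPair

/-- For each `α < ω₁`, the set `𝓘*_α = {p ∈ Q_{\bar C} : ∃ β ∈ p, β ≥ α}`
is dense in `Q_{\bar C}` (with the end-extension ordering). -/
theorem stmt3 (Cbar : Ordinal.{0} → Set Ordinal.{0})
    (hCbar : ∀ δ, δ < omega1 → Order.IsSuccLimit δ →
      Cbar δ ⊆ Set.Iio δ ∧ ∀ β < δ, ∃ γ ∈ Cbar δ, β < γ)
    (α : Ordinal.{0}) (hα : α < omega1)
    (p : Set Ordinal.{0}) (hp : p ∈ QbarC Cbar) :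
    ∃ q ∈ QbarC Cbar, EndExt p q ∧ ∃ β ∈ q, α ≤ β := by
  obtain ⟨α₀, hα₀, hsub, hclosed, hbdd⟩ := hp
  have hβ : max α α₀ < omega1 := max_lt hα hα₀
  refine ⟨p ∪ {α₀, max α α₀}, ?_, ?_, max α α₀, Or.inr (Or.inr rfl), le_max_left α α₀⟩
  · exact union_pair_mem_QbarC (fun δ hδ hlim => (hCbar δ (hδ.trans_lt hβ) hlim).1) hsub
      hclosed hbdd (le_max_right α α₀) hβ
  · exact endExt_union_of_subset_Ici hsub (pair_subset_Ici (le_max_right α α₀))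
end

section
/- Suppose $\langle p_n : n < \omega \rangle$ is an increasing sequence in $Q_{\bar C}$ (end-extensions), $\delta = \sup_n \sup(p_n)$ is a limit ordinal, and for every $n$ the set $(p_{n+1} \cup \{\sup p_{n+1}\}) \setminus (p_n \cup \{\sup p_n\})$ is disjoint from $C_\delta$, and moreover for every limit $\delta' < \delta$ there is $n$ with $\sup(p_n) > \delta'$. Then $q = \bigcup_n p_n$ together with the requirement at $\delta$ satisfies: $q$ is a closed subset of $\delta$, $\sup(q) = \delta$ or $q$ bounded, and $q \cap C_\delta \subseteq p_0 \cup \{\sup p_0\}$, so in particular $q \cap C_\delta$ is bounded below $\delta$. -/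
/-!
Below any limit `δ' < δ` the union `q` agrees with a single `p n` (some point of `p n` lies
above `δ'` and the `p n` end-extend each other), so closedness of `q` below `δ` is inherited
from `p n`. The points of `C_δ` that ever enter `q` are, by the avoidance hypothesis, already
in `p 0 ∪ {sup p 0}`; so if `sup p 0 < δ` they are bounded by `sup p 0`, and otherwise they lie
in `p 0 ∩ C_δ`, which the requirement on the condition `p 0` at `δ` bounds below `δ`.
-/

open Ordinal

namespace EndExt

theorem refl (c : Set Ordinal.{0}) : EndExt c c :=
  ⟨subset_rfl, fun _ hy _ _ _ => hy⟩

theorem trans {c₁ c₂ c₃ : Set Ordinal.{0}} (h₁₂ : EndExt c₁ c₂) (h₂₃ : EndExt c₂ c₃) :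
    EndExt c₁ c₃ :=
  ⟨h₁₂.1.trans h₂₃.1, fun y hy x hx hyx => h₁₂.2 y (h₂₃.2 y hy x (h₁₂.1 hx) hyx) x hx hyx⟩

instance : Std.Refl EndExt := ⟨refl⟩

instance : IsTrans (Set Ordinal.{0}) EndExt := ⟨fun _ _ _ => trans⟩

theorem of_le {p : ℕ → Set Ordinal.{0}} (hp : ∀ n, EndExt (p n) (p (n + 1))) {m n : ℕ}
    (hmn : m ≤ n) : EndExt (p m) (p n) :=
  Nat.rel_of_forall_rel_succ_of_le EndExt hp hmn

theorem iUnion_inter_Iio_eq {p : ℕ → Set Ordinal.{0}} (hp : ∀ n, EndExt (p n) (p (n + 1)))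
    {n : ℕ} {x β : Ordinal.{0}} (hx : x ∈ p n) (hβx : β ≤ x) :
    (⋃ m, p m) ∩ Set.Iio β = p n ∩ Set.Iio β := by
  refine Set.Subset.antisymm ?_ (Set.inter_subset_inter_left _ (Set.subset_iUnion p n))
  rintro y ⟨hy, hyβ⟩
  obtain ⟨m, hym⟩ := Set.mem_iUnion.1 hy
  refine ⟨?_, hyβ⟩
  rcases le_total m n with hmn | hnm
  · exact (of_le hp hmn).1 hym
  · exact (of_le hp hnm).2 y hym x hx (hyβ.le.trans hβx)

end EndExt

theorem Set.inter_subset_zero_of_diff_succ_inter_eq_empty {α : Type*} {A : ℕ → Set α}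
    {S : Set α} (hA : ∀ n, (A (n + 1) \ A n) ∩ S = ∅) (n : ℕ) : A n ∩ S ⊆ A 0 := by
  induction n with
  | zero => exact Set.inter_subset_left
  | succ n ih =>
    intro x hx
    by_contra hx0
    have hxn : x ∉ A n := fun hxn => hx0 (ih ⟨hxn, hx.2⟩)
    exact (Set.eq_empty_iff_forall_notMem.1 (hA n)) x ⟨⟨hx.1, hxn⟩, hx.2⟩

namespace QbarC

variable {Cbar : Ordinal.{0} → Set Ordinal.{0}} {c : Set Ordinal.{0}}

theorem bddAbove (hc : c ∈ QbarC Cbar) : BddAbove c := by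
  obtain ⟨α, -, hcα, -⟩ := hc
  exact ⟨α, fun x hx => (hcα hx).le⟩

theorem sSup_lt_omega1 (hc : c ∈ QbarC Cbar) : sSup c < omega1 := by
  obtain ⟨α, hα, hcα, -⟩ := hc
  exact (csSup_le' fun x hx => (hcα hx).le).trans_lt hα

theorem mem_of_sSup_inter_Iio_eq (hc : c ∈ QbarC Cbar) {δ x : Ordinal.{0}} (hx : x ∈ c)
    (hδx : δ < x) (hδ : Order.IsSuccLimit δ) (hsup : sSup (c ∩ Set.Iio δ) = δ) : δ ∈ c := by
  obtain ⟨α, -, hcα, hclosed, -⟩ := hc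
  exact hclosed δ (hδx.trans (hcα hx)) hδ hsup

/-- Either `c` accumulates to `δ`, and the defining requirement of `QbarC` applies, or
`c ∩ δ` is already bounded below `δ`. -/
theorem sSup_inter_lt (hc : c ∈ QbarC Cbar) {δ : Ordinal.{0}} (hδ : Order.IsSuccLimit δ)
    (hCδ : Cbar δ ⊆ Set.Iio δ) : sSup (c ∩ Cbar δ) < δ := by
  obtain ⟨α, -, hcα, -, hbound⟩ := hc
  have hsub : c ∩ Cbar δ ⊆ c ∩ Set.Iio δ := Set.inter_subset_inter_right c hCδ
  have hle : sSup (c ∩ Set.Iio δ) ≤ δ := csSup_le' fun x hx => hx.2.le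
  rcases hle.lt_or_eq with hlt | heq
  · exact (csSup_le_csSup' ⟨δ, fun x hx => hx.2.le⟩ hsub).trans_lt hlt
  · have hδα : δ ≤ α := heq ▸ csSup_le' fun x hx => (hcα hx.1).le
    exact hbound δ hδα hδ heq

end QbarC

/-- Limit step of the properness argument for `Q_{\bar C}`: if
`⟨p_n : n < ω⟩` is an increasing sequence of conditions,
`δ = sup_n sup(p_n)` is a limit ordinal, the new points
`(p_{n+1} ∪ {sup p_{n+1}}) \ (p_n ∪ {sup p_n})` avoid `C_δ`, and the
`sup(p_n)` are cofinal below `δ`, then `q = ⋃_n p_n` is closed below `δ`,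
`sup(q) = δ` or `q` is bounded, and `q ∩ C_δ ⊆ p_0 ∪ {sup p_0}`, so in
particular `q ∩ C_δ` is bounded below `δ`. -/
theorem stmt5 (Cbar : Ordinal.{0} → Set Ordinal.{0})
    (hCbar : ∀ δ, δ < omega1 → Order.IsSuccLimit δ →
      Cbar δ ⊆ Set.Iio δ ∧ ∀ β < δ, ∃ γ ∈ Cbar δ, β < γ)
    (p : ℕ → Set Ordinal.{0}) (hp : ∀ n, p n ∈ QbarC Cbar)
    (hinc : ∀ n, EndExt (p n) (p (n + 1)))
    (δ : Ordinal.{0}) (hδ : δ = ⨆ n, sSup (p n)) (hδlim : Order.IsSuccLimit δ)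
    (havoid : ∀ n,
      ((p (n + 1) ∪ {sSup (p (n + 1))}) \ (p n ∪ {sSup (p n)})) ∩ Cbar δ = ∅)
    (hcof : ∀ δ' < δ, Order.IsSuccLimit δ' → ∃ n, δ' < sSup (p n)) :
    (∀ δ'' < δ, Order.IsSuccLimit δ'' → sSup ((⋃ n, p n) ∩ Set.Iio δ'') = δ'' →
        δ'' ∈ ⋃ n, p n) ∧
    (sSup (⋃ n, p n) = δ ∨ sSup (⋃ n, p n) < δ) ∧
    (⋃ n, p n) ∩ Cbar δ ⊆ p 0 ∪ {sSup (p 0)} ∧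
    sSup ((⋃ n, p n) ∩ Cbar δ) < δ := by
  have hsSup_le : ∀ n, sSup (p n) ≤ δ := hδ ▸ Ordinal.le_iSup _
  have hq_le : sSup (⋃ n, p n) ≤ δ := csSup_le' fun x hx => by
    obtain ⟨n, hn⟩ := Set.mem_iUnion.1 hx
    exact (le_csSup (QbarC.bddAbove (hp n)) hn).trans (hsSup_le n)
  have hqC : (⋃ n, p n) ∩ Cbar δ ⊆ p 0 ∪ {sSup (p 0)} := by
    rintro x ⟨hx, hxC⟩
    obtain ⟨n, hn⟩ := Set.mem_iUnion.1 hx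
    exact Set.inter_subset_zero_of_diff_succ_inter_eq_empty (A := fun n => p n ∪ {sSup (p n)})
      havoid n ⟨Or.inl hn, hxC⟩
  refine ⟨fun δ' hδ' hlim hsup => ?_, hq_le.eq_or_lt, hqC, ?_⟩
  · obtain ⟨n, hn⟩ := hcof δ' hδ' hlim
    obtain ⟨x, hx, hδ'x⟩ := exists_lt_of_lt_csSup' hn
    rw [EndExt.iUnion_inter_Iio_eq hinc hx hδ'x.le] at hsup
    exact Set.mem_iUnion.2 ⟨n, QbarC.mem_of_sSup_inter_Iio_eq (hp n) hx hδ'x hlim hsup⟩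
  · rcases (hsSup_le 0).lt_or_eq with hlt | heq
    · refine (csSup_le' fun x hx => ?_).trans_lt hlt
      rcases hqC hx with hx0 | rfl
      exacts [le_csSup (QbarC.bddAbove (hp 0)) hx0, le_rfl]
    · have hCδ := (hCbar δ (heq ▸ QbarC.sSup_lt_omega1 (hp 0)) hδlim).1
      have hsub : (⋃ n, p n) ∩ Cbar δ ⊆ p 0 ∩ Cbar δ := fun x hx =>
        ⟨(hqC hx).resolve_right fun h => (hCδ hx.2).ne (h.trans heq), hx.2⟩
      exact (csSup_le_csSup' ⟨δ, fun x hx => (hCδ hx.2).le⟩ hsub).trans_lt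
        (QbarC.sSup_inter_lt (hp 0) hδlim hCδ)
end

section
/- Let $\bar C = \langle C_\delta : \delta < \omega_1 \text{ limit}\rangle$ with each $C_\delta$ unbounded in $\delta$ of order type $\omega$, and let $Q^1_{\bar C}$ be the set of functions $f : \alpha \to 2$ for non-limit $\alpha < \omega_1$ such that $f^{-1}(\{1\})$ is closed (in $\alpha$) and for every limit $\delta < \alpha$, $\sup(f^{-1}(\{1\}) \cap C_\delta) < \delta$, ordered by extension of functions. Suppose $\langle N_i : i \le \omega \rangle$ are countable elementary submodels of $(H(\chi), \in)$ with $Q^1_{\bar C} \in N_0$, $N_i \prec N_{i+1}$, $N_\omega = \bigcup_{i<\omega} N_i$, and $C_{N_\omega \cap \omega_1} = \{ N_i \cap \omega_1 : i < \omega \}$. Then there is no condition $q \in Q^1_{\bar C}$ that is simultaneously $(N_i, Q^1_{\bar C})$-generic for infinitely many $i < \omega$ and $(N_\omega, Q^1_{\bar C})$-generic with $\mathrm{dom}(q) \supseteq N_\omega \cap \omega_1$ forcing its generic club to be unbounded in $N_\omega \cap \omega_1$. -/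
open Ordinal FirstOrder

/-- The language of set theory: a single binary relation symbol `mem`. -/
inductive memRel : ℕ → Type
  | mem : memRel 2

/-- The language of set theory. -/
def memLang : Language := ⟨fun _ => Empty, memRel⟩

/-- A set `A` of ZF-sets as a structure for the language of set theory,
interpreting the relation symbol by true membership. -/
def memStr (A : Set ZFSet.{0}) : memLang.Structure A where
  funMap := fun f _ => f.elim
  RelMap | .mem => fun x => ((x 0) : ZFSet) ∈ ((x 1) : ZFSet)

/-- Satisfaction of a first-order formula of set theory in `(A, ∈)`. -/
def SatZ (A : Set ZFSet.{0}) {n : ℕ} (φ : memLang.Formula (Fin n))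
    (v : Fin n → ↥A) : Prop :=
  @Language.Formula.Realize memLang ↥A (memStr A) (Fin n) φ v

/-- `N` is an elementary submodel of `(H, ∈)`:  `N ⊆ H` and every first-order
formula of set theory with parameters from `N` holds in `(N, ∈)` iff it holds
in `(H, ∈)`. -/
def ElemIn (N H : Set ZFSet.{0}) : Prop :=
  ∃ hsub : N ⊆ H, ∀ (n : ℕ) (φ : memLang.Formula (Fin n)) (v : Fin n → ↥N),
    SatZ N φ v ↔ SatZ H φ (fun i => Set.inclusion hsub (v i))

/-- The von Neumann ZF-set coding an ordinal. -/
noncomputable def ordToZF (o : Ordinal.{0}) : ZFSet.{0} :=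
  ZFSet.range fun i : o.ToType => ordToZF ((Ordinal.ToType.mk (o := o)).symm i).val
termination_by o
decreasing_by exact ((Ordinal.ToType.mk (o := o)).symm i).2

/-- `x` is hereditarily of cardinality `< χ`. -/
inductive Hered (χ : Cardinal.{1}) : ZFSet.{0} → Prop
  | intro (x : ZFSet.{0}) (hx : Cardinal.mk x.toSet < χ) (ih : ∀ y ∈ x, Hered χ y) :
      Hered χ x

/-- `H(χ)`: the sets hereditarily of cardinality `< χ`. -/
def Hset (χ : Cardinal.{1}) : Set ZFSet.{0} := {x | Hered χ x}

/-- The ordinal `N ∩ ω₁` (the supremum of the countable ordinals whose codes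
belong to `N`; for `N` elementary this set is an ordinal). -/
noncomputable def traceOrd (N : Set ZFSet.{0}) : Ordinal.{0} :=
  sSup {α | α < omega1 ∧ ordToZF α ∈ N}

/-- The ZF-set coding a condition of `Q^1_{\bar C}`: the function with domain
`α` sending `β < α` to `f β ∈ 2`, coded as a set of Kuratowski pairs. -/
noncomputable def condCode (α : Ordinal.{0}) (f : Ordinal.{0} → Bool) : ZFSet.{0} :=
  ZFSet.range fun i : α.ToType =>
    ZFSet.pair (ordToZF ((Ordinal.ToType.mk (o := α)).symm i).val)
      (ordToZF (if f ((Ordinal.ToType.mk (o := α)).symm i).val then 1 else 0))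

/-- `p` codes a condition of `Q^1_{\bar C}`: a function `f : α → 2` for some
non-limit `α < ω₁` such that `f⁻¹({1})` is closed in `α` and for every limit
`δ < α`, `sup(f⁻¹({1}) ∩ C_δ) < δ`. -/
def IsCondZ (Cbar : Ordinal.{0} → Set Ordinal.{0}) (p : ZFSet.{0}) : Prop :=
  ∃ (α : Ordinal.{0}) (f : Ordinal.{0} → Bool), α < omega1 ∧ ¬ Order.IsSuccLimit α ∧
    p = condCode α f ∧
    (∀ δ < α, Order.IsSuccLimit δ → sSup {β | β < δ ∧ f β = true} = δ → f δ = true) ∧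
    (∀ δ < α, Order.IsSuccLimit δ → sSup {β | β ∈ Cbar δ ∧ f β = true} < δ)

/-- `q` is `(N, Q^1_{\bar C})`-generic: for every dense open subset `D` of
`Q^1_{\bar C}` with `D ∈ N`, the set `D ∩ N` is predense above `q`
(the ordering of conditions is extension of functions, i.e. inclusion of
their ZF-codes). -/
def IsGenericFor (Cbar : Ordinal.{0} → Set Ordinal.{0}) (N : Set ZFSet.{0})
    (q : ZFSet.{0}) : Prop :=
  ∀ Dz : ZFSet.{0}, Dz ∈ N →
    (∀ x ∈ Dz.toSet, IsCondZ Cbar x) →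
    (∀ p, IsCondZ Cbar p → ∃ r ∈ Dz.toSet, p ⊆ r) →
    (∀ p r, r ∈ Dz.toSet → IsCondZ Cbar p → r ⊆ p → p ∈ Dz.toSet) →
    ∀ q', IsCondZ Cbar q' → q ⊆ q' →
      ∃ r ∈ Dz.toSet ∩ N, ∃ s, IsCondZ Cbar s ∧ q' ⊆ s ∧ r ⊆ s

/-!
Let `q` be `(N, Q)`-generic with `δ_N = N ∩ ω₁ < dom q`. For `β < δ_N` the conditions having a
`1` above `β` form a dense open set which is definable from parameters in `N`, hence belongs to
`N`; so some `r ∈ N` in it is compatible with `q`, and by elementarity a `1`-point of `r` above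
`β` already lies in `N`, i.e. below `δ_N`. Hence `q⁻¹{1}` is unbounded in the limit ordinal
`δ_N`, and closedness gives `q(δ_N) = 1`. For infinitely many `i` this puts `N_i ∩ ω₁` into
`q⁻¹{1} ∩ C_δ`, where `δ = N_ω ∩ ω₁`; these points are cofinal in `δ`, contradicting
`sup (q⁻¹{1} ∩ C_δ) < δ`.
-/

/-! ### Codes of ordinals and conditions -/

theorem ordToZF_eq_toZFSet : ordToZF = toZFSet := by
  funext o
  induction o using WellFoundedLT.induction with
  | _ o ih =>
    ext x
    rw [ordToZF, ZFSet.mem_range, mem_toZFSet_iff]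
    constructor
    · rintro ⟨i, rfl⟩
      exact ⟨_, ((ToType.mk (o := o)).symm i).2, (ih _ ((ToType.mk (o := o)).symm i).2).symm⟩
    · rintro ⟨a, ha, rfl⟩
      exact ⟨ToType.mk (o := o) ⟨a, ha⟩, by simp [ih a ha]⟩

theorem omega1_isSuccLimit : Order.IsSuccLimit omega1 :=
  Cardinal.isSuccLimit_ord (Cardinal.aleph0_le_aleph 1)

theorem add_one_lt_omega1 {β : Ordinal.{0}} (h : β < omega1) : β + 1 < omega1 :=
  omega1_isSuccLimit.add_one_lt h

theorem mem_condCode {x : ZFSet.{0}} {α : Ordinal.{0}} {f : Ordinal.{0} → Bool} :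
    x ∈ condCode α f ↔
      ∃ β < α, x = ZFSet.pair β.toZFSet (if f β then 1 else 0 : Ordinal).toZFSet := by
  rw [condCode, ZFSet.mem_range, ordToZF_eq_toZFSet]
  constructor
  · rintro ⟨i, rfl⟩
    exact ⟨_, ((ToType.mk (o := α)).symm i).2, rfl⟩
  · rintro ⟨a, ha, rfl⟩
    exact ⟨ToType.mk (o := α) ⟨a, ha⟩, by simp⟩

theorem toZFSet_boolCode_injective {a b : Bool}
    (h : (if a then 1 else 0 : Ordinal.{0}).toZFSet = (if b then 1 else 0 : Ordinal.{0}).toZFSet) :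
    a = b := by
  have := toZFSet_injective h
  cases a <;> cases b <;> simp_all

theorem condCode_subset_condCode_iff {α α' : Ordinal.{0}} {f f' : Ordinal.{0} → Bool} :
    condCode α f ⊆ condCode α' f' ↔ α ≤ α' ∧ ∀ β < α, f β = f' β := by
  constructor
  · intro h
    have key : ∀ β < α, β < α' ∧ f β = f' β := by
      intro β hβ
      obtain ⟨γ, hγ, he⟩ := mem_condCode.1 (h (mem_condCode.2 ⟨β, hβ, rfl⟩))
      obtain ⟨hβγ, hf⟩ := ZFSet.pair_injective he
      obtain rfl := toZFSet_injective hβγ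
      exact ⟨hγ, toZFSet_boolCode_injective hf⟩
    exact ⟨le_of_forall_lt fun β hβ => (key β hβ).1, fun β hβ => (key β hβ).2⟩
  · rintro ⟨hα, hf⟩ x hx
    obtain ⟨β, hβ, rfl⟩ := mem_condCode.1 hx
    exact mem_condCode.2 ⟨β, hβ.trans_le hα, by rw [hf β hβ]⟩

theorem pair_one_mem_condCode_iff {γ α : Ordinal.{0}} {f : Ordinal.{0} → Bool} :
    ZFSet.pair γ.toZFSet (toZFSet 1) ∈ condCode α f ↔ γ < α ∧ f γ = true := by
  constructor
  · intro h
    obtain ⟨β, hβ, he⟩ := mem_condCode.1 h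
    obtain ⟨hγβ, hf⟩ := ZFSet.pair_injective he
    obtain rfl := toZFSet_injective hγβ
    exact ⟨hβ, by simpa using toZFSet_boolCode_injective (a := true) (by simpa using hf)⟩
  · rintro ⟨hγ, hf⟩
    exact mem_condCode.2 ⟨γ, hγ, by simp [hf]⟩

/-- Bounded quantifiers only, so that it is absolute for transitive classes. On a condition code
`p`, with `o = 1̂` and `b = β̂`, it says that `c` codes a point above `β` sent to `1`
(`onePointAbove_condCode_iff`): `w` runs over the Kuratowski pairs `{{γ̂}, {γ̂, ε̂}}` in `p`. -/
def OnePointAbove (p o b c : ZFSet.{0}) : Prop :=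
  ∃ w ∈ p, ∃ z ∈ w, o ∈ z ∧ c ∈ z ∧ b ∈ c

theorem eq_or_eq_of_mem_of_mem_pair {x y z t : ZFSet.{0}} (hz : z ∈ ZFSet.pair x y)
    (ht : t ∈ z) : t = x ∨ t = y := by
  rcases ZFSet.mem_pair.1 hz with rfl | rfl
  · exact Or.inl (ZFSet.mem_singleton.1 ht)
  · exact ZFSet.mem_pair.1 ht

theorem onePointAbove_condCode_iff {α β : Ordinal.{0}} {f : Ordinal.{0} → Bool} {c : ZFSet.{0}}
    (hβ : 1 ≤ β) :
    OnePointAbove (condCode α f) (toZFSet 1) β.toZFSet c ↔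
      ∃ γ, c = γ.toZFSet ∧ β < γ ∧ γ < α ∧ f γ = true := by
  constructor
  · rintro ⟨w, hw, z, hz, hone, hc, hβc⟩
    obtain ⟨γ, hγ, rfl⟩ := mem_condCode.1 hw
    -- `c`, `1̂` lie in `{γ̂, ε̂}` and `ε ≤ 1 ≤ β`: so `c = γ̂`, and then `1 < γ` forces `1̂ = ε̂`
    have hbit : (if f γ then 1 else 0 : Ordinal.{0}) ≤ 1 := by split_ifs <;> simp
    rcases eq_or_eq_of_mem_of_mem_pair hz hc with rfl | rfl
    · have hβγ := toZFSet_mem_toZFSet_iff.1 hβc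
      refine ⟨γ, rfl, hβγ, hγ, ?_⟩
      rcases eq_or_eq_of_mem_of_mem_pair hz hone with h | h
      · exact absurd (toZFSet_injective h ▸ hβγ) hβ.not_gt
      · simpa using toZFSet_boolCode_injective (a := true) (by simpa using h)
    · exact absurd ((toZFSet_mem_toZFSet_iff.1 hβc).trans_le hbit) hβ.not_gt
  · rintro ⟨γ, rfl, hβγ, hγ, hf⟩
    exact ⟨_, pair_one_mem_condCode_iff.2 ⟨hγ, hf⟩, _, ZFSet.mem_pair.2 (Or.inr rfl),
      ZFSet.mem_pair.2 (Or.inr rfl), ZFSet.mem_pair.2 (Or.inl rfl),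
      toZFSet_mem_toZFSet_iff.2 hβγ⟩

theorem OnePointAbove.mono {p p' o b c : ZFSet.{0}} (h : OnePointAbove p o b c) (hp : p ⊆ p') :
    OnePointAbove p' o b c :=
  let ⟨w, hw, rest⟩ := h
  ⟨w, hp hw, rest⟩

/-! ### Transitive classes and `H(χ)` -/

def IsTransClass (A : Set ZFSet.{0}) : Prop :=
  ∀ ⦃x⦄, x ∈ A → ∀ ⦃y⦄, y ∈ x → y ∈ A

theorem IsTransClass.forall_mem_iff_iff_eq {A : Set ZFSet.{0}} (hA : IsTransClass A)
    {x y : ZFSet.{0}} (hx : x ∈ A) (hy : ∀ t ∈ y, t ∈ A) :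
    (∀ t ∈ A, t ∈ x ↔ t ∈ y) ↔ x = y :=
  ⟨fun h => ZFSet.ext fun t => ⟨fun ht => (h t (hA hx ht)).1 ht, fun ht => (h t (hy t ht)).2 ht⟩,
    fun h _ _ => h ▸ Iff.rfl⟩

theorem OnePointAbove.mem {A : Set ZFSet.{0}} (hA : IsTransClass A) {p o b c : ZFSet.{0}}
    (h : OnePointAbove p o b c) (hp : p ∈ A) : c ∈ A :=
  let ⟨_, hw, _, hz, _, hc, _⟩ := h
  hA (hA (hA hp hw) hz) hc

section Hered

variable {χ : Cardinal.{1}}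

theorem isTransClass_Hset : IsTransClass (Hset χ) := by
  rintro x ⟨_, _, ih⟩ y hy
  exact ih y hy

theorem sep_mem_Hset {x : ZFSet.{0}} (hx : x ∈ Hset χ) (P : ZFSet.{0} → Prop) :
    x.sep P ∈ Hset χ := by
  obtain ⟨_, hcard, ih⟩ := hx
  refine ⟨_, (Cardinal.mk_le_mk_of_subset fun y hy => (ZFSet.mem_sep.1 hy).1).trans_lt hcard,
    fun y hy => ih y (ZFSet.mem_sep.1 hy).1⟩

theorem toZFSet_mem_Hset (hχ : Cardinal.aleph 1 < χ) {a : Ordinal.{0}} (ha : a < omega1) :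
    a.toZFSet ∈ Hset χ := by
  induction a using WellFoundedLT.induction with
  | _ a ih =>
    refine ⟨_, ?_, fun y hy => ?_⟩
    · calc Cardinal.mk a.toZFSet.toSet = Cardinal.lift a.card := by
            rw [← card_toZFSet]; exact ZFSet.cardinalMk_coe_sort
        _ < Cardinal.lift (Cardinal.aleph 1) := Cardinal.lift_lt.2 (Cardinal.lt_ord.1 ha)
        _ ≤ χ := by simpa using hχ.le
    · obtain ⟨b, hb, rfl⟩ := mem_toZFSet_iff.1 hy
      exact ih b hb (hb.trans ha)

end Hered

/-! ### Formulas and elementary submodels -/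

attribute [local instance] memStr

def memF {k n : ℕ} (t u : memLang.Term (Fin k ⊕ Fin n)) : memLang.BoundedFormula (Fin k) n :=
  Language.Relations.boundedFormula₂ (memRel.mem : memLang.Relations 2) t u

infix:75 " ∈ₘ " => memF

def param {k n : ℕ} (i : Fin k) : memLang.Term (Fin k ⊕ Fin n) := Language.Term.var (Sum.inl i)

section Formulas

variable {A : Set ZFSet.{0}} {k n : ℕ}

@[simp] theorem realize_memF {t u : memLang.Term (Fin k ⊕ Fin n)} {v : Fin k → A}
    {xs : Fin n → A} :
    (t ∈ₘ u).Realize v xs ↔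
      (t.realize (M := A) (Sum.elim v xs) : ZFSet) ∈ (u.realize (M := A) (Sum.elim v xs) : ZFSet) :=
  Iff.rfl

@[simp] theorem realize_param {i : Fin k} {v : Fin k → A} {xs : Fin n → A} :
    (param i : memLang.Term (Fin k ⊕ Fin n)).realize (M := A) (Sum.elim v xs) = v i :=
  rfl

/-! In the formulas below `&0` is the object being described, `&1, &2, …` are bound by the
quantifiers from the outside in, and `param i` is the `i`-th parameter. -/

def emptyF : memLang.BoundedFormula (Fin 0) 1 :=
  ∀' ∼(&1 ∈ₘ &0)

def succF : memLang.BoundedFormula (Fin 1) 1 :=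
  ∀' (&1 ∈ₘ &0 ⇔ (&1 =' param 0 ⊔ &1 ∈ₘ param 0))

def onePointAboveF : memLang.BoundedFormula (Fin 3) 1 :=
  ∃' ∃' (&1 ∈ₘ param 0 ⊓ &2 ∈ₘ &1 ⊓ param 1 ∈ₘ &2 ⊓ &0 ∈ₘ &2 ⊓ param 2 ∈ₘ &0)

def sepOnePointAboveF : memLang.BoundedFormula (Fin 3) 1 :=
  ∀' (&1 ∈ₘ &0 ⇔
    (&1 ∈ₘ param 0 ⊓ ∃' onePointAboveF.relabel ![Sum.inr 1, Sum.inl 1, Sum.inl 2]))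

variable (hA : IsTransClass A)
include hA

theorem realize_emptyF {v : Fin 0 → A} {x : A} :
    emptyF.Realize v (fun _ => x) ↔ (x : ZFSet) = ∅ := by
  rw [← hA.forall_mem_iff_iff_eq x.2 (by simp)]
  simp [emptyF, Fin.snoc]

theorem realize_succF {v : Fin 1 → A} {x : A} :
    succF.Realize v (fun _ => x) ↔ (x : ZFSet) = insert (v 0 : ZFSet) (v 0 : ZFSet) := by
  rw [← hA.forall_mem_iff_iff_eq x.2 fun t ht => ?_]
  · simp [succF, Fin.snoc, Subtype.ext_iff]
  · rcases ZFSet.mem_insert_iff.1 ht with rfl | ht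
    exacts [(v 0).2, hA (v 0).2 ht]

theorem realize_onePointAboveF {v : Fin 3 → A} {c : A} :
    onePointAboveF.Realize v (fun _ => c) ↔ OnePointAbove (v 0) (v 1) (v 2) c := by
  simp only [onePointAboveF, Language.BoundedFormula.realize_ex,
    Language.BoundedFormula.realize_inf, realize_memF, realize_param, Language.Term.realize_var,
    Sum.elim_inr, Function.comp_apply]
  constructor
  · rintro ⟨w, z, ⟨⟨⟨hw, hz⟩, ho⟩, hc⟩, hb⟩
    exact ⟨w, hw, z, hz, ho, hc, hb⟩
  · rintro ⟨w, hw, z, hz, ho, hc, hb⟩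
    have hwA := hA (v 0).2 hw
    exact ⟨⟨w, hwA⟩, ⟨z, hA hwA hz⟩, ⟨⟨⟨hw, hz⟩, ho⟩, hc⟩, hb⟩

theorem realize_sepOnePointAboveF {v : Fin 3 → A} {x : A} :
    sepOnePointAboveF.Realize v (fun _ => x) ↔
      (x : ZFSet) = (v 0 : ZFSet).sep (fun p => ∃ c, OnePointAbove p (v 1) (v 2) c) := by
  rw [← hA.forall_mem_iff_iff_eq x.2 fun t ht => hA (v 0).2 (ZFSet.mem_sep.1 ht).1]
  simp only [sepOnePointAboveF, Language.BoundedFormula.realize_all,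
    Language.BoundedFormula.realize_ex, Language.BoundedFormula.realize_inf,
    Language.BoundedFormula.realize_iff, Language.BoundedFormula.realize_relabel, realize_memF,
    realize_param, Language.Term.realize_var, Sum.elim_inr, Function.comp_apply, ZFSet.mem_sep]
  refine Subtype.forall.trans (forall₂_congr fun t ht => iff_congr Iff.rfl
    (and_congr_right fun _ => ?_))
  have hxs : ∀ c : A, (Fin.snoc (Fin.snoc (fun _ => x) ⟨t, ht⟩) c ∘ Fin.natAdd (1 + 1) :
      Fin 1 → A) = fun _ => c := fun c => funext fun i => by fin_cases i; rfl
  simp only [hxs, realize_onePointAboveF hA]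
  exact ⟨fun ⟨c, hc⟩ => ⟨c, hc⟩, fun ⟨c, hc⟩ => ⟨⟨c, OnePointAbove.mem hA hc ht⟩, hc⟩⟩

end Formulas

theorem ElemIn.subset {N H : Set ZFSet.{0}} (h : ElemIn N H) : N ⊆ H := h.1

def ElemIn.toElementaryEmbedding {N H : Set ZFSet.{0}} (h : ElemIn N H) : N ↪ₑ[memLang] H where
  toFun := Set.inclusion h.1
  map_formula' n φ x := (h.2 n φ x).symm

theorem ElemIn.exists_mem_realize {N H : Set ZFSet.{0}} (hN : ElemIn N H) {α : Type}
    (ψ : memLang.BoundedFormula α 1) {v : α → H} (hv : ∀ i, (v i : ZFSet) ∈ N) {x : H}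
    (hx : ψ.Realize v fun _ => x) : ∃ y : H, (y : ZFSet) ∈ N ∧ ψ.Realize v fun _ => y := by
  let e := hN.toElementaryEmbedding
  let vN : α → N := fun i => ⟨v i, hv i⟩
  have hex : ψ.ex.Realize (e ∘ vN) (e ∘ default) :=
    Language.BoundedFormula.realize_ex.2 ⟨x, hx⟩
  obtain ⟨y, hy⟩ := Language.BoundedFormula.realize_ex.1 ((e.map_boundedFormula _ _ _).1 hex)
  exact ⟨e y, y.2, (e.map_boundedFormula ψ vN _).2 hy⟩

theorem ElemIn.mem_of_realize_unique {N H : Set ZFSet.{0}} (hN : ElemIn N H) {α : Type}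
    (ψ : memLang.BoundedFormula α 1) {v : α → H} (hv : ∀ i, (v i : ZFSet) ∈ N) {x : H}
    (hx : ψ.Realize v fun _ => x) (huniq : ∀ y : H, (ψ.Realize v fun _ => y) → y = x) :
    (x : ZFSet) ∈ N := by
  obtain ⟨y, hyN, hy⟩ := hN.exists_mem_realize ψ hv hx
  rwa [← huniq y hy]

section Elementary

variable {χ : Cardinal.{1}} {N : Set ZFSet.{0}}

theorem ElemIn.toZFSet_zero_mem (hN : ElemIn N (Hset χ)) (hχ : Cardinal.aleph 1 < χ) :
    toZFSet 0 ∈ N := by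
  refine hN.mem_of_realize_unique emptyF (v := finZeroElim) finZeroElim
    (x := ⟨toZFSet 0, toZFSet_mem_Hset hχ omega1_isSuccLimit.bot_lt⟩) ?_ fun y hy => Subtype.ext ?_
  · exact (realize_emptyF isTransClass_Hset).2 toZFSet_zero
  · rwa [realize_emptyF isTransClass_Hset, ← toZFSet_zero] at hy

theorem ElemIn.toZFSet_add_one_mem (hN : ElemIn N (Hset χ)) (hχ : Cardinal.aleph 1 < χ)
    {β : Ordinal.{0}} (hβ : β < omega1) (h : β.toZFSet ∈ N) : (β + 1).toZFSet ∈ N := by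
  refine hN.mem_of_realize_unique succF (v := ![⟨_, hN.subset h⟩]) (Fin.forall_fin_one.2 h)
    (x := ⟨_, toZFSet_mem_Hset hχ (add_one_lt_omega1 hβ)⟩) ?_ fun y hy => Subtype.ext ?_
  · exact (realize_succF isTransClass_Hset).2 (toZFSet_add_one β)
  · rw [realize_succF isTransClass_Hset] at hy
    simpa using hy

theorem ElemIn.exists_onePointAbove_mem {H : Set ZFSet.{0}} (hN : ElemIn N H)
    (hH : IsTransClass H) {p o b c : ZFSet.{0}} (hp : p ∈ N) (ho : o ∈ N) (hb : b ∈ N)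
    (hc : OnePointAbove p o b c) : ∃ c' ∈ N, OnePointAbove p o b c' := by
  obtain ⟨y, hyN, hy⟩ := hN.exists_mem_realize onePointAboveF
    (v := ![⟨p, hN.subset hp⟩, ⟨o, hN.subset ho⟩, ⟨b, hN.subset hb⟩])
    (by simp [Fin.forall_fin_succ, hp, ho, hb]) (x := ⟨c, hc.mem hH (hN.subset hp)⟩)
    ((realize_onePointAboveF hH).2 hc)
  exact ⟨y, hyN, (realize_onePointAboveF hH).1 hy⟩

theorem ElemIn.sep_onePointAbove_mem (hN : ElemIn N (Hset χ)) {Q o b : ZFSet.{0}}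
    (hQ : Q ∈ N) (ho : o ∈ N) (hb : b ∈ N) :
    Q.sep (fun p => ∃ c, OnePointAbove p o b c) ∈ N := by
  refine hN.mem_of_realize_unique sepOnePointAboveF
    (v := ![⟨Q, hN.subset hQ⟩, ⟨o, hN.subset ho⟩, ⟨b, hN.subset hb⟩])
    (by simp [Fin.forall_fin_succ, hQ, ho, hb])
    (x := ⟨_, sep_mem_Hset (hN.subset hQ) fun p => ∃ c, OnePointAbove p o b c⟩)
    ((realize_sepOnePointAboveF isTransClass_Hset).2 rfl) fun y hy => Subtype.ext ?_
  exact (realize_sepOnePointAboveF isTransClass_Hset).1 hy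

theorem ElemIn.toZFSet_one_mem (hN : ElemIn N (Hset χ))
    (hχ : Cardinal.aleph 1 < χ) : toZFSet 1 ∈ N := by
  simpa using hN.toZFSet_add_one_mem hχ omega1_isSuccLimit.bot_lt (hN.toZFSet_zero_mem hχ)

end Elementary

/-! ### The trace `N ∩ ω₁` -/

section Trace

variable {N : Set ZFSet.{0}}

theorem traceOrd_eq (N : Set ZFSet.{0}) :
    traceOrd N = sSup {α | α < omega1 ∧ α.toZFSet ∈ N} := by
  rw [traceOrd, ordToZF_eq_toZFSet]

theorem bddAbove_trace (N : Set ZFSet.{0}) : BddAbove {α | α < omega1 ∧ α.toZFSet ∈ N} :=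
  ⟨omega1, fun _ ha => ha.1.le⟩

theorem le_traceOrd {β : Ordinal.{0}} (hβ : β < omega1) (h : β.toZFSet ∈ N) : β ≤ traceOrd N :=
  (traceOrd_eq N).symm ▸ le_csSup (bddAbove_trace N) ⟨hβ, h⟩

theorem traceOrd_mono {M : Set ZFSet.{0}} (h : N ⊆ M) : traceOrd N ≤ traceOrd M := by
  rw [traceOrd_eq, traceOrd_eq]
  exact csSup_le_csSup' (bddAbove_trace M) fun a ha => ⟨ha.1, h ha.2⟩

theorem exists_mem_of_lt_traceOrd {β : Ordinal.{0}} (h : β < traceOrd N) :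
    ∃ γ, β < γ ∧ γ < omega1 ∧ γ.toZFSet ∈ N := by
  rw [traceOrd_eq] at h
  obtain ⟨γ, ⟨hγ, hγN⟩, hβγ⟩ := exists_lt_of_lt_csSup' h
  exact ⟨γ, hβγ, hγ, hγN⟩

variable (hsucc : ∀ β < omega1, β.toZFSet ∈ N → (β + 1).toZFSet ∈ N)
include hsucc

theorem lt_traceOrd {β : Ordinal.{0}} (hβ : β < omega1) (h : β.toZFSet ∈ N) : β < traceOrd N :=
  (lt_add_one β).trans_le (le_traceOrd (add_one_lt_omega1 hβ) (hsucc β hβ h))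

theorem isSuccLimit_traceOrd (hzero : toZFSet 0 ∈ N) : Order.IsSuccLimit (traceOrd N) := by
  refine isSuccLimit_iff.2 ⟨(lt_traceOrd hsucc omega1_isSuccLimit.bot_lt hzero).ne',
    Order.isSuccPrelimit_iff_succ_lt.2 fun a ha => ?_⟩
  obtain ⟨γ, haγ, hγ, hγN⟩ := exists_mem_of_lt_traceOrd ha
  exact (Order.succ_le_of_lt haγ).trans_lt (lt_traceOrd hsucc hγ hγN)

end Trace

theorem traceOrd_iUnion_le_csSup {N : ℕ → Set ZFSet.{0}} (hN : Monotone N) {I : Set ℕ}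
    (hI : I.Infinite) {S : Set Ordinal.{0}} (hS : BddAbove S)
    (h : ∀ i ∈ I, traceOrd (N i) ∈ S) : traceOrd (⋃ i, N i) ≤ sSup S := by
  rw [traceOrd_eq]
  refine csSup_le' fun a ⟨ha, haN⟩ => ?_
  obtain ⟨j, hj⟩ := Set.mem_iUnion.1 haN
  obtain ⟨i, hi, hji⟩ := hI.exists_gt j
  calc a ≤ traceOrd (N j) := le_traceOrd ha hj
    _ ≤ traceOrd (N i) := traceOrd_mono (hN hji.le)
    _ ≤ sSup S := le_csSup hS (h i hi)

/-! ### Conditions and generic conditions -/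

theorem setOf_and_eq_true_congr {α : Type*} [LT α] {P : α → Prop} {δ : α} {f g : α → Bool}
    (hP : ∀ β, P β → β < δ) (h : ∀ β < δ, f β = g β) :
    {β | P β ∧ f β = true} = {β | P β ∧ g β = true} :=
  Set.ext fun β => and_congr_right fun hβ => by rw [h β (hP β hβ)]

section Conditions

variable {Cbar : Ordinal.{0} → Set Ordinal.{0}}
  (hC : ∀ δ < omega1, Order.IsSuccLimit δ → Cbar δ ⊆ Set.Iio δ)
include hC

theorem isCondZ_condCode_iff {α : Ordinal.{0}} {f : Ordinal.{0} → Bool} :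
    IsCondZ Cbar (condCode α f) ↔ α < omega1 ∧ ¬ Order.IsSuccLimit α ∧
      (∀ δ < α, Order.IsSuccLimit δ → sSup {β | β < δ ∧ f β = true} = δ → f δ = true) ∧
      (∀ δ < α, Order.IsSuccLimit δ → sSup {β | β ∈ Cbar δ ∧ f β = true} < δ) := by
  refine ⟨?_, fun ⟨hα, hlim, hclosed, hsup⟩ => ⟨α, f, hα, hlim, rfl, hclosed, hsup⟩⟩
  rintro ⟨α', f', hα', hlim, heq, hclosed, hsup⟩
  obtain ⟨hle, hff'⟩ := condCode_subset_condCode_iff.1 heq.le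
  obtain rfl := hle.antisymm (condCode_subset_condCode_iff.1 heq.ge).1
  refine ⟨hα', hlim, fun δ hδ hδlim hδsup => ?_, fun δ hδ hδlim => ?_⟩
  · rw [setOf_and_eq_true_congr (fun _ h => h) fun β hβ => hff' β (hβ.trans hδ)] at hδsup
    rw [hff' δ hδ]
    exact hclosed δ hδ hδlim hδsup
  · rw [setOf_and_eq_true_congr (fun β h => hC δ (hδ.trans hα') hδlim h)
      fun β hβ => hff' β (hβ.trans hδ)]
    exact hsup δ hδ hδlim

theorem IsCondZ.exists_extension {p : ZFSet.{0}} (hp : IsCondZ Cbar p) {β : Ordinal.{0}}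
    (hβ : β < omega1) : ∃ α f, IsCondZ Cbar (condCode α f) ∧ p ⊆ condCode α f ∧
      ∃ μ, β < μ ∧ μ < α ∧ f μ = true := by
  obtain ⟨αp, fp, hαp, hαplim, rfl, hclosed, hsup⟩ := hp
  set μ := max β αp + 1
  have hαpμ : αp < μ := (le_max_right β αp).trans_lt (lt_add_one _)
  let g : Ordinal.{0} → Bool := fun x => if x < αp then fp x else decide (x = μ)
  have hg : ∀ x < αp, g x = fp x := fun x hx => if_pos hx
  have hg_above : ∀ δ ≤ μ, ∀ x < δ, g x = true → x < αp := by
    intro δ hδ x hx hgx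
    by_contra hxαp
    have : x = μ := by simpa [g, hxαp] using hgx
    exact (hx.trans_le hδ).ne this
  -- the new `1` at `μ` is not below any limit `δ ≤ μ`, so limits `δ ≥ αp` satisfy both clauses
  have hμω : μ + 1 < omega1 := add_one_lt_omega1 (add_one_lt_omega1 (max_lt hβ hαp))
  have hsmall : ∀ δ < μ + 1, Order.IsSuccLimit δ → αp ≤ δ → ∀ P : Ordinal.{0} → Prop,
      (∀ x, P x → x < δ) → sSup {x | P x ∧ g x = true} < δ := by
    intro δ hδ hδlim hαpδ P hP
    have hle : sSup {x | P x ∧ g x = true} ≤ αp := csSup_le' fun x hx =>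
      (hg_above δ (Order.lt_add_one_iff.1 hδ) x (hP x hx.1) hx.2).le
    exact hle.trans_lt (hαpδ.lt_of_ne fun h => hαplim (h ▸ hδlim))
  refine ⟨μ + 1, g, (isCondZ_condCode_iff hC).2 ⟨hμω, Order.not_isSuccLimit_add_one μ,
      fun δ hδ hδlim hδsup => ?_, fun δ hδ hδlim => ?_⟩,
    condCode_subset_condCode_iff.2 ⟨(hαpμ.trans (lt_add_one μ)).le, fun x hx => (hg x hx).symm⟩,
    μ, (le_max_left β αp).trans_lt (lt_add_one _), lt_add_one μ, by simp [g, hαpμ.not_gt]⟩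
  · rcases lt_or_ge δ αp with hδαp | hαpδ
    · rw [setOf_and_eq_true_congr (fun _ h => h) fun x hx => hg x (hx.trans hδαp)] at hδsup
      rw [hg δ hδαp]
      exact hclosed δ hδαp hδlim hδsup
    · exact absurd hδsup (hsmall δ hδ hδlim hαpδ (· < δ) fun _ h => h).ne
  · rcases lt_or_ge δ αp with hδαp | hαpδ
    · rw [setOf_and_eq_true_congr (fun x h => hC δ (hδ.trans hμω) hδlim h)
        fun x hx => hg x (hx.trans hδαp)]
      exact hsup δ hδαp hδlim
    · exact hsmall δ hδ hδlim hαpδ (· ∈ Cbar δ) fun x hx => hC δ (hδ.trans hμω) hδlim hx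

end Conditions

section Generic

variable {Cbar : Ordinal.{0} → Set Ordinal.{0}} {χ : Cardinal.{1}} {N : Set ZFSet.{0}}
  {Qc : ZFSet.{0}} (hC : ∀ δ < omega1, Order.IsSuccLimit δ → Cbar δ ⊆ Set.Iio δ)
  (hχ : Cardinal.aleph 1 < χ) (hN : ElemIn N (Hset χ)) (hQc : Qc.toSet = {x | IsCondZ Cbar x})
  (hQN : Qc ∈ N)
include hC hχ hN hQc hQN

theorem IsGenericFor.exists_mem_compatible_onePointAbove {q : ZFSet.{0}} (hq : IsCondZ Cbar q)
    (hgen : IsGenericFor Cbar N q) {β : Ordinal.{0}} (h1β : 1 ≤ β) (hβ : β < omega1)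
    (hβN : β.toZFSet ∈ N) :
    ∃ r ∈ N, IsCondZ Cbar r ∧ (∃ c, OnePointAbove r (toZFSet 1) β.toZFSet c) ∧
      ∃ s, IsCondZ Cbar s ∧ q ⊆ s ∧ r ⊆ s := by
  set D := Qc.sep fun p => ∃ c, OnePointAbove p (toZFSet 1) β.toZFSet c
  have hD : ∀ p, p ∈ D ↔ IsCondZ Cbar p ∧ ∃ c, OnePointAbove p (toZFSet 1) β.toZFSet c :=
    fun p => ZFSet.mem_sep.trans (and_congr_left' (Set.ext_iff.1 hQc p))
  have hdense : ∀ p, IsCondZ Cbar p → ∃ r ∈ D.toSet, p ⊆ r := by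
    intro p hp
    obtain ⟨α, f, hcond, hpr, μ, hβμ, hμα, hfμ⟩ := hp.exists_extension hC hβ
    exact ⟨_, (hD _).2 ⟨hcond, _, (onePointAbove_condCode_iff h1β).2 ⟨μ, rfl, hβμ, hμα, hfμ⟩⟩,
      hpr⟩
  obtain ⟨r, ⟨hrD, hrN⟩, s, hs, hqs, hrs⟩ :=
    hgen D (hN.sep_onePointAbove_mem hQN (hN.toZFSet_one_mem hχ) hβN)
      (fun x hx => ((hD x).1 hx).1) hdense
      (fun p r hr hp hrp => (hD p).2 ⟨hp, ((hD r).1 hr).2.imp fun _ hc => hc.mono hrp⟩)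
      q hq subset_rfl
  exact ⟨r, hrN, ((hD r).1 hrD).1, ((hD r).1 hrD).2, s, hs, hqs, hrs⟩

theorem IsGenericFor.exists_lt_apply_eq_true {α : Ordinal.{0}} {f : Ordinal.{0} → Bool}
    (hq : IsCondZ Cbar (condCode α f)) (hgen : IsGenericFor Cbar N (condCode α f))
    (htα : traceOrd N < α) {β : Ordinal.{0}} (hβ : β < traceOrd N) :
    ∃ γ, β < γ ∧ γ < traceOrd N ∧ f γ = true := by
  obtain ⟨β', hββ', hβ', hβ'N⟩ := exists_mem_of_lt_traceOrd hβ
  have h1 : 1 ≤ β' + 1 := by simp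
  obtain ⟨r, hrN, ⟨αr, fr, hαr, -, rfl, -⟩, ⟨c, hc⟩, s, ⟨αs, fs, -, -, rfl, -⟩, hqs, hrs⟩ :=
    hgen.exists_mem_compatible_onePointAbove hC hχ hN hQc hQN hq h1 (add_one_lt_omega1 hβ')
      (hN.toZFSet_add_one_mem hχ hβ' hβ'N)
  obtain ⟨c', hc'N, hc'⟩ := hN.exists_onePointAbove_mem isTransClass_Hset hrN
    (hN.toZFSet_one_mem hχ) (hN.toZFSet_add_one_mem hχ hβ' hβ'N) hc
  obtain ⟨γ, rfl, hβγ, hγαr, hfrγ⟩ := (onePointAbove_condCode_iff h1).1 hc'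
  have hγt : γ < traceOrd N :=
    lt_traceOrd (fun _ hβ h => hN.toZFSet_add_one_mem hχ hβ h) (hγαr.trans hαr) hc'N
  have hfsγ := (pair_one_mem_condCode_iff.1 (hrs (pair_one_mem_condCode_iff.2 ⟨hγαr, hfrγ⟩))).2
  refine ⟨γ, (hββ'.trans (lt_add_one β')).trans hβγ, hγt, ?_⟩
  rwa [(condCode_subset_condCode_iff.1 hqs).2 γ (hγt.trans htα)]

theorem IsGenericFor.apply_traceOrd_eq_true {α : Ordinal.{0}} {f : Ordinal.{0} → Bool}
    (hq : IsCondZ Cbar (condCode α f)) (hgen : IsGenericFor Cbar N (condCode α f))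
    (htα : traceOrd N < α) : f (traceOrd N) = true := by
  obtain ⟨-, -, hclosed, -⟩ := (isCondZ_condCode_iff hC).1 hq
  have hlim := isSuccLimit_traceOrd (fun _ hβ h => hN.toZFSet_add_one_mem hχ hβ h)
    (hN.toZFSet_zero_mem hχ)
  refine hclosed _ htα hlim (le_antisymm (csSup_le' fun _ h => h.1.le) ?_)
  refine le_of_forall_lt fun β hβ => ?_
  obtain ⟨γ, hβγ, hγt, hfγ⟩ := hgen.exists_lt_apply_eq_true hC hχ hN hQc hQN hq htα hβ
  exact hβγ.trans_le (le_csSup ⟨_, fun _ h => h.1.le⟩ ⟨hγt, hfγ⟩)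

end Generic

theorem stmt11_general (Cbar : Ordinal.{0} → Set Ordinal.{0})
    (hCbar : ∀ δ, δ < omega1 → Order.IsSuccLimit δ →
      Cbar δ ⊆ Set.Iio δ ∧ (∀ β < δ, ∃ γ ∈ Cbar δ, β < γ) ∧
      otp (Cbar δ) = Ordinal.omega0.{1})
    (χ : Cardinal.{1}) (hχ : Cardinal.aleph 1 < χ)
    (Nset : ℕ → Set ZFSet.{0})
    (helem : ∀ i, ElemIn (Nset i) (Hset χ))
    (hchain : ∀ i, ElemIn (Nset i) (Nset (i + 1)))
    (Qc : ZFSet.{0}) (hQc : Qc.toSet = {x | IsCondZ Cbar x})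
    (hQN : Qc ∈ Nset 0)
    (hguess : Cbar (traceOrd (⋃ i, Nset i)) =
      Set.range fun i : ℕ => traceOrd (Nset i)) :
    ¬ ∃ (α : Ordinal.{0}) (f : Ordinal.{0} → Bool),
        IsCondZ Cbar (condCode α f) ∧
        {i : ℕ | IsGenericFor Cbar (Nset i) (condCode α f)}.Infinite ∧
        IsGenericFor Cbar (⋃ i, Nset i) (condCode α f) ∧
        traceOrd (⋃ i, Nset i) ≤ α ∧
        sSup {β | β < traceOrd (⋃ i, Nset i) ∧ f β = true} =
          traceOrd (⋃ i, Nset i) := by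
  rintro ⟨α, f, hq, hinf, -, hδα, -⟩
  have hC : ∀ δ < omega1, Order.IsSuccLimit δ → Cbar δ ⊆ Set.Iio δ :=
    fun δ hδ hlim => (hCbar δ hδ hlim).1
  have hmono : Monotone Nset := monotone_nat_of_le_succ fun i => (hchain i).subset
  obtain ⟨hαω, hαlim, -, hsup⟩ := (isCondZ_condCode_iff hC).1 hq
  set δ := traceOrd (⋃ i, Nset i)
  have hδlim : Order.IsSuccLimit δ := by
    refine isSuccLimit_traceOrd (fun β hβ h => ?_)
      (Set.mem_iUnion.2 ⟨0, (helem 0).toZFSet_zero_mem hχ⟩)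
    obtain ⟨i, hi⟩ := Set.mem_iUnion.1 h
    exact Set.mem_iUnion.2 ⟨i, (helem i).toZFSet_add_one_mem hχ hβ hi⟩
  have hδα : δ < α := hδα.lt_of_ne fun h => hαlim (h ▸ hδlim)
  refine (hsup δ hδα hδlim).not_ge (traceOrd_iUnion_le_csSup hmono hinf
    ⟨δ, fun x hx => (hC δ (hδα.trans hαω) hδlim hx.1).le⟩ fun i hi => ⟨hguess ▸ ⟨i, rfl⟩, ?_⟩)
  exact hi.apply_traceOrd_eq_true hC hχ (helem i) hQc (hmono (Nat.zero_le i) hQN) hq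
    ((traceOrd_mono (Set.subset_iUnion Nset i)).trans_lt hδα)

/-- `Q^1_{\bar C}` is not `ω`-proper: if `⟨N_i : i ≤ ω⟩` is an increasing
chain of countable elementary submodels of `(H(χ), ∈)` with
`Q^1_{\bar C} ∈ N_0`, `N_ω = ⋃_i N_i`, and the guessed set satisfies
`C_{N_ω ∩ ω₁} = {N_i ∩ ω₁ : i < ω}`, then no condition `q` with domain
`⊇ N_ω ∩ ω₁` whose `1`-set is unbounded in `N_ω ∩ ω₁` can be
`(N_i, Q)`-generic for infinitely many `i` and `(N_ω, Q)`-generic. -/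
theorem stmt11 (Cbar : Ordinal.{0} → Set Ordinal.{0})
    (hCbar : ∀ δ, δ < omega1 → Order.IsSuccLimit δ →
      Cbar δ ⊆ Set.Iio δ ∧ (∀ β < δ, ∃ γ ∈ Cbar δ, β < γ) ∧
      otp (Cbar δ) = Ordinal.omega0.{1})
    (χ : Cardinal.{1}) (hreg : χ.IsRegular) (hχ : Cardinal.aleph 1 < χ)
    (Nset : ℕ → Set ZFSet.{0})
    (helem : ∀ i, ElemIn (Nset i) (Hset χ))
    (hcnt : ∀ i, (Nset i).Countable)
    (hchain : ∀ i, ElemIn (Nset i) (Nset (i + 1)))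
    (Qc : ZFSet.{0}) (hQc : Qc.toSet = {x | IsCondZ Cbar x})
    (hQN : Qc ∈ Nset 0)
    (hguess : Cbar (traceOrd (⋃ i, Nset i)) =
      Set.range fun i : ℕ => traceOrd (Nset i)) :
    ¬ ∃ (α : Ordinal.{0}) (f : Ordinal.{0} → Bool),
        IsCondZ Cbar (condCode α f) ∧
        {i : ℕ | IsGenericFor Cbar (Nset i) (condCode α f)}.Infinite ∧
        IsGenericFor Cbar (⋃ i, Nset i) (condCode α f) ∧
        traceOrd (⋃ i, Nset i) ≤ α ∧
        sSup {β | β < traceOrd (⋃ i, Nset i) ∧ f β = true} =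
          traceOrd (⋃ i, Nset i) :=
  stmt11_general Cbar hCbar χ hχ Nset helem hchain Qc hQc hQN hguess
end
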